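/- Fix a sample path ξ ∈ [0,1]^N with ξ_k ≠ x for all k, prices α, β ≥ 0, and let 0 < ε ≤ min_k |ξ_k − x|. Then the imbalance cost under the greedy ε-storage control equals the no-storage imbalance cost minus ε·(α+β)·Λ(x,ξ) − ε·β·1{ξ_{N−1} > x}, where Λ(x,ξ) is the number of strict downcrossings of x by ξ. -/
import Mathlib

open scoped Classical

theorem greedy_control_cost_reduction
    (N : ℕ) (hN : 1 ≤ N) (x α β ε : ℝ) (hα : 0 ≤ α) (hβ : 0 ≤ β)
    (ξ : ℕ → ℝ) (hξrange : ∀ k < N, ξ k ∈ Set.Icc (0 : ℝ) 1)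
    (hξne : ∀ k < N, ξ k ≠ x)
    (hε0 : 0 < ε) (hεgap : ∀ k < N, ε ≤ |ξ k - x|)
    (u : ℕ → ℝ)
    (hu0 : u 0 = if ξ 0 > x then -ε else 0)
    (huk : ∀ k, 1 ≤ k →
      u k = -(if ξ (k - 1) < x ∧ x < ξ k then ε else 0) +
             (if ξ (k - 1) > x ∧ x > ξ k then ε else 0)) :
    (∑ k ∈ Finset.range N,
        (α * max (x - ξ k - u k) 0 + β * max (ξ k + u k - x) 0))
      = (∑ k ∈ Finset.range N, (α * max (x - ξ k) 0 + β * max (ξ k - x) 0))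
        - ε * (α + β) *
            (((Finset.range (N - 1)).filter
                (fun k => ξ k > x ∧ x > ξ (k + 1))).card : ℝ)
        - ε * β * (if ξ (N - 1) > x then 1 else 0) := by
  obtain ⟨M, rfl⟩ : ∃ M, N = M + 1 := ⟨N - 1, (Nat.succ_pred_eq_of_pos hN).symm⟩
  -- bounds on u
  have hub : ∀ k, -ε ≤ u k ∧ u k ≤ ε := by
    intro k
    rcases Nat.eq_zero_or_pos k with rfl | hk
    · rw [hu0]; split_ifs <;> constructor <;> linarith
    · rw [huk k hk]; split_ifs <;> constructor <;> linarith
  -- pointwise identity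
  have hpt : ∀ k ∈ Finset.range (M + 1),
      α * max (x - ξ k - u k) 0 + β * max (ξ k + u k - x) 0
        = (α * max (x - ξ k) 0 + β * max (ξ k - x) 0)
          + (if ξ k > x then β else -α) * u k := by
    intro k hk
    rw [Finset.mem_range] at hk
    have hgap := hεgap k hk
    have hne := hξne k hk
    obtain ⟨h1, h2⟩ := hub k
    rcases lt_or_gt_of_ne hne with h | h
    · have habs : |ξ k - x| = x - ξ k := by
        rw [abs_of_neg (by linarith)]; ring
      rw [habs] at hgap
      have e1 : max (x - ξ k - u k) 0 = x - ξ k - u k := max_eq_left (by linarith)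
      have e2 : max (ξ k + u k - x) 0 = 0 := max_eq_right (by linarith)
      have e3 : max (x - ξ k) 0 = x - ξ k := max_eq_left (by linarith)
      have e4 : max (ξ k - x) 0 = 0 := max_eq_right (by linarith)
      rw [e1, e2, e3, e4, if_neg (by linarith : ¬ ξ k > x)]; ring
    · have habs : |ξ k - x| = ξ k - x := abs_of_pos (by linarith)
      rw [habs] at hgap
      have e1 : max (x - ξ k - u k) 0 = 0 := max_eq_right (by linarith)
      have e2 : max (ξ k + u k - x) 0 = ξ k + u k - x := max_eq_left (by linarith)
      have e3 : max (x - ξ k) 0 = 0 := max_eq_right (by linarith)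
      have e4 : max (ξ k - x) 0 = ξ k - x := max_eq_left (by linarith)
      rw [e1, e2, e3, e4, if_pos h]; ring
  -- telescoping crossing count
  have tele : ∀ n, (∀ k, k ≤ n → ξ k ≠ x) →
      ((Finset.range n).filter (fun j => ξ j > x ∧ x > ξ (j+1))).card
        + (if ξ n > x then 1 else 0)
      = ((Finset.range n).filter (fun j => ξ j < x ∧ x < ξ (j+1))).card
        + (if ξ 0 > x then 1 else 0) := by
    intro n
    induction n with
    | zero => intro _; simp
    | succ m ih =>
      intro hne
      have ihm := ih (fun k hk => hne k (hk.trans (Nat.le_succ m)))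
      have hm := hne m (Nat.le_succ m)
      have hm1 := hne (m+1) le_rfl
      rw [Finset.range_add_one, Finset.filter_insert, Finset.filter_insert]
      by_cases hA : ξ m > x <;> by_cases hB : ξ (m+1) > x
      · have hdn : ¬(ξ m > x ∧ x > ξ (m+1)) := fun h => absurd hB (asymm h.2)
        have hup : ¬(ξ m < x ∧ x < ξ (m+1)) := fun h => absurd hA (asymm h.1)
        rw [if_neg hdn, if_neg hup, if_pos hB]
        rw [if_pos hA] at ihm
        omega
      · have hdn : ξ m > x ∧ x > ξ (m+1) :=
          ⟨hA, lt_of_le_of_ne (not_lt.mp hB) hm1⟩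
        have hup : ¬(ξ m < x ∧ x < ξ (m+1)) := fun h => absurd hA (asymm h.1)
        rw [if_pos hdn, if_neg hup, Finset.card_insert_of_notMem (by simp),
          if_neg hB]
        rw [if_pos hA] at ihm
        omega
      · have hA' : ξ m < x := lt_of_le_of_ne (not_lt.mp hA) hm
        have hdn : ¬(ξ m > x ∧ x > ξ (m+1)) := fun h => absurd hA' (asymm h.1)
        have hup : ξ m < x ∧ x < ξ (m+1) := ⟨hA', hB⟩
        rw [if_neg hdn, if_pos hup, Finset.card_insert_of_notMem (by simp),
          if_pos hB]
        rw [if_neg hA] at ihm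
        omega
      · have hdn : ¬(ξ m > x ∧ x > ξ (m+1)) := fun h => absurd h.1 hA
        have hup : ¬(ξ m < x ∧ x < ξ (m+1)) := fun h => absurd h.2 hB
        rw [if_neg hdn, if_neg hup, if_neg hB]
        rw [if_neg hA] at ihm
        omega
  -- rewrite the cost sum
  rw [Finset.sum_congr rfl hpt, Finset.sum_add_distrib]
  have hterm : ∀ j : ℕ, (if ξ (j+1) > x then β else -α) * u (j+1)
      = (if ξ j > x ∧ x > ξ (j+1) then -(ε*α) else 0)
        + (if ξ j < x ∧ x < ξ (j+1) then -(ε*β) else 0) := by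
    intro j
    rw [huk (j+1) (Nat.le_add_left 1 j)]
    simp only [Nat.add_sub_cancel]
    by_cases hd : ξ j > x ∧ x > ξ (j+1) <;> by_cases hu2 : ξ j < x ∧ x < ξ (j+1)
    · exact absurd hu2.1 (asymm hd.1)
    · rw [if_pos hd, if_neg hu2, if_pos hd, if_neg hu2, if_neg (asymm hd.2)]
      ring
    · rw [if_neg hd, if_pos hu2, if_neg hd, if_pos hu2, if_pos hu2.2]
      ring
    · rw [if_neg hd, if_neg hu2, if_neg hd, if_neg hu2]
      ring
  have hsum : ∑ k ∈ Finset.range (M+1), (if ξ k > x then β else -α) * u k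
      = -(ε*α) * (((Finset.range M).filter (fun j => ξ j > x ∧ x > ξ (j+1))).card : ℝ)
        + -(ε*β) * (((Finset.range M).filter (fun j => ξ j < x ∧ x < ξ (j+1))).card : ℝ)
        + -(ε*β) * (if ξ 0 > x then 1 else 0) := by
    rw [Finset.sum_range_succ']
    have h0 : (if ξ 0 > x then β else -α) * u 0
        = -(ε*β) * (if ξ 0 > x then 1 else 0) := by
      rw [hu0]; split_ifs <;> ring
    rw [h0, Finset.sum_congr rfl (fun j _ => hterm j), Finset.sum_add_distrib]
    have hD : ∑ j ∈ Finset.range M, (if ξ j > x ∧ x > ξ (j+1) then -(ε*α) else 0)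
        = -(ε*α) * (((Finset.range M).filter (fun j => ξ j > x ∧ x > ξ (j+1))).card : ℝ) := by
      rw [← Finset.sum_filter, Finset.sum_const, nsmul_eq_mul]; ring
    have hU : ∑ j ∈ Finset.range M, (if ξ j < x ∧ x < ξ (j+1) then -(ε*β) else 0)
        = -(ε*β) * (((Finset.range M).filter (fun j => ξ j < x ∧ x < ξ (j+1))).card : ℝ) := by
      rw [← Finset.sum_filter, Finset.sum_const, nsmul_eq_mul]; ring
    rw [hD, hU]
  rw [hsum]
  have hteleR := tele M (fun k hk => hξne k (by omega))
  have hteleR' : (((Finset.range M).filter (fun j => ξ j > x ∧ x > ξ (j+1))).card : ℝ)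
      + (if ξ M > x then 1 else 0)
      = (((Finset.range M).filter (fun j => ξ j < x ∧ x < ξ (j+1))).card : ℝ)
      + (if ξ 0 > x then 1 else 0) := by
    have := congrArg (Nat.cast : ℕ → ℝ) hteleR
    push_cast at this
    convert this using 2 <;> split_ifs <;> simp
  simp only [Nat.add_sub_cancel]
  linear_combination (ε * β) * hteleR'
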